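/- Let $E_p(t) = \sum_{k \geq 0} t^{p^k}/p^k$. Then the Artin–Hasse exponential $\exp\left(\sum_{k \geq 0} t^{p^k}/p^k\right)$ is a formal power series with coefficients in $\mathbb{Z}_{(p)}$. -/

import Mathlib

open PowerSeries Finset

section AHaux

variable (p : ℕ) [Fact p.Prime]

noncomputable def AHL : PowerSeries ℚ_[p] :=
  PowerSeries.mk (Set.indicator {m : ℕ | ∃ k : ℕ, m + 1 = p ^ k} fun _ => (1 : ℚ_[p]))

noncomputable def AHPhi (g : PowerSeries ℚ_[p]) : PowerSeries ℚ_[p] :=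
  PowerSeries.mk fun m => if p ∣ m then coeff (m / p) g else 0

noncomputable def AHE : PowerSeries ℚ_[p] :=
  PowerSeries.mk fun m => (p : ℚ_[p]) ^ m / (m.factorial : ℚ_[p])

variable {p}

lemma coeff_AHPhi (g : PowerSeries ℚ_[p]) (m : ℕ) :
    coeff m (AHPhi p g) = if p ∣ m then coeff (m / p) g else 0 := by
  simp [AHPhi]

open Classical in
lemma coeff_AHL (m : ℕ) :
    coeff m (AHL p) = if ∃ k : ℕ, m + 1 = p ^ k then 1 else 0 := by
  simp only [AHL, coeff_mk, Set.indicator_apply, Set.mem_setOf_eq]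

lemma sum_pmul (M : ℕ) (g : ℕ → ℚ_[p]) (hg : ∀ i, ¬ p ∣ i → g i = 0) :
    ∑ i ∈ Finset.range (p * M + 1), g i = ∑ a ∈ Finset.range (M + 1), g (p * a) := by
  have hp1 : 0 < p := (Fact.out : p.Prime).pos
  rw [← Finset.sum_filter_of_ne (p := fun i => p ∣ i)
    (fun x _ hx => by by_contra h; exact hx (hg x h))]
  refine Finset.sum_nbij' (fun i => i / p) (fun a => p * a) ?_ ?_ ?_ ?_ ?_
  · intro i hi
    simp only [Finset.mem_filter, Finset.mem_range] at hi ⊢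
    obtain ⟨h1, c, rfl⟩ := hi
    exact Nat.lt_succ_of_le (by
      rw [Nat.mul_div_cancel_left _ hp1]
      exact Nat.le_of_mul_le_mul_left (Nat.lt_succ_iff.mp h1) hp1)
  · intro a ha
    simp only [Finset.mem_range] at ha
    simp only [Finset.mem_filter, Finset.mem_range]
    exact ⟨Nat.lt_succ_of_le (Nat.mul_le_mul_left _ (Nat.lt_succ_iff.mp ha)), Dvd.intro _ rfl⟩
  · intro i hi
    simp only [Finset.mem_filter] at hi
    exact Nat.mul_div_cancel' hi.2
  · intro a _
    exact Nat.mul_div_cancel_left _ hp1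
  · intro i hi
    simp only [Finset.mem_filter] at hi
    rw [Nat.mul_div_cancel' hi.2]

lemma AHPhi_mul (u v : PowerSeries ℚ_[p]) :
    AHPhi p (u * v) = AHPhi p u * AHPhi p v := by
  have hp1 : 0 < p := (Fact.out : p.Prime).pos
  ext m
  rw [coeff_AHPhi]
  by_cases hm : p ∣ m
  · obtain ⟨M, rfl⟩ := hm
    rw [if_pos ⟨M, rfl⟩, Nat.mul_div_cancel_left _ hp1]
    rw [coeff_mul, coeff_mul, Finset.Nat.sum_antidiagonal_eq_sum_range_succ_mk,
      Finset.Nat.sum_antidiagonal_eq_sum_range_succ_mk]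
    simp only [Nat.succ_eq_add_one]
    rw [sum_pmul M _ (fun i hi => by rw [coeff_AHPhi, if_neg hi, zero_mul])]
    refine Finset.sum_congr rfl fun a ha => ?_
    simp only [Finset.mem_range] at ha
    have ha' : a ≤ M := Nat.lt_succ_iff.mp ha
    have hsub : p * M - p * a = p * (M - a) := (Nat.mul_sub ..).symm
    rw [coeff_AHPhi, coeff_AHPhi, if_pos ⟨a, rfl⟩, Nat.mul_div_cancel_left _ hp1, hsub,
      if_pos ⟨M - a, rfl⟩, Nat.mul_div_cancel_left _ hp1]
  · rw [if_neg hm, coeff_mul, Finset.Nat.sum_antidiagonal_eq_sum_range_succ_mk]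
    refine (Finset.sum_eq_zero fun i hi => ?_).symm
    by_cases h1 : p ∣ i
    · have h2 : ¬ p ∣ m - i := by
        simp only [Finset.mem_range] at hi
        intro h2
        have := Nat.dvd_add h1 h2
        rw [Nat.add_sub_cancel' (Nat.lt_succ_iff.mp hi)] at this
        exact hm this
      rw [coeff_AHPhi (m := m - i), if_neg h2, mul_zero]
    · rw [coeff_AHPhi, if_neg h1, zero_mul]


lemma constantCoeff_AHE : constantCoeff (AHE p) = 1 := by
  rw [← coeff_zero_eq_constantCoeff]
  simp [AHE]

lemma AHE_deriv : d⁄dX ℚ_[p] (AHE p) = (p : ℚ_[p]) • AHE p := by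
  ext n
  have h1 : ((n+1).factorial : ℚ_[p]) = ((n : ℚ_[p]) + 1) * (n.factorial : ℚ_[p]) := by
    rw [Nat.factorial_succ]
    push_cast
    ring
  have h2 : (n.factorial : ℚ_[p]) ≠ 0 := by exact_mod_cast n.factorial_ne_zero
  have h3 : ((n : ℚ_[p]) + 1) ≠ 0 := Nat.cast_add_one_ne_zero n
  rw [coeff_derivative, map_smul]
  simp only [AHE, coeff_mk, smul_eq_mul]
  rw [h1]
  field_simp
  ring

lemma coeff_X_pow_mul_zero (f : PowerSeries ℚ_[p]) {k m : ℕ} (h : m < k) :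
    coeff m ((X : PowerSeries ℚ_[p]) ^ k * f) = 0 := by
  have : (X : PowerSeries ℚ_[p]) ^ k ∣ X ^ k * f := Dvd.intro _ rfl
  exact (PowerSeries.X_pow_dvd_iff.mp this) m h

lemma AHPhi_deriv (g : PowerSeries ℚ_[p]) :
    d⁄dX ℚ_[p] (AHPhi p g) = (p : ℚ_[p]) • ((X : PowerSeries ℚ_[p]) ^ (p - 1) * AHPhi p (d⁄dX ℚ_[p] g)) := by
  have hp1 : 0 < p := (Fact.out : p.Prime).pos
  ext m
  rw [coeff_derivative, map_smul, smul_eq_mul, coeff_AHPhi]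
  by_cases hm : p ∣ m + 1
  · obtain ⟨M, hM⟩ := hm
    have hM1 : 1 ≤ M := by
      rcases Nat.eq_zero_or_pos M with rfl | h
      · simp at hM
      · exact h
    have hple : p ≤ p * M := Nat.le_mul_of_pos_right p hM1
    have hsub : p * (M - 1) = p * M - p := by rw [Nat.mul_sub, mul_one]
    have hm' : m = p * (M - 1) + (p - 1) := by omega
    rw [if_pos ⟨M, hM⟩, hM, Nat.mul_div_cancel_left _ hp1, hm', coeff_X_pow_mul,
      coeff_AHPhi, if_pos ⟨M - 1, rfl⟩, Nat.mul_div_cancel_left _ hp1, coeff_derivative]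
    have h4 : M - 1 + 1 = M := by omega
    rw [h4, Nat.cast_sub hM1]
    have hcast : ((p * (M - 1) + (p - 1) : ℕ) : ℚ_[p]) + 1 = (p : ℚ_[p]) * (M : ℚ_[p]) := by
      have h5 : (p * (M - 1) + (p - 1) : ℕ) + 1 = p * M := by omega
      calc ((p * (M - 1) + (p - 1) : ℕ) : ℚ_[p]) + 1
          = (((p * (M - 1) + (p - 1) : ℕ) + 1 : ℕ) : ℚ_[p]) := by push_cast; ring
        _ = ((p * M : ℕ) : ℚ_[p]) := by rw [h5]
        _ = (p : ℚ_[p]) * (M : ℚ_[p]) := by push_cast; ring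
    rw [hcast]
    push_cast
    ring
  · rw [if_neg hm, zero_mul]
    by_cases hlt : m < p - 1
    · rw [coeff_X_pow_mul_zero _ hlt, mul_zero]
    · push_neg at hlt
      obtain ⟨d, hdp⟩ : ∃ d, m + 1 = d + p := ⟨m + 1 - p, by omega⟩
      have hm' : m = d + (p - 1) := by omega
      rw [hm', coeff_X_pow_mul, coeff_AHPhi]
      have hnd : ¬ p ∣ d := by
        intro hd
        exact hm (by rw [hdp]; exact Nat.dvd_add hd (dvd_refl p))
      rw [if_neg hnd, mul_zero]

lemma X_pow_mul_AHPhi_AHL :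
    (X : PowerSeries ℚ_[p]) ^ (p - 1) * AHPhi p (AHL p) = AHL p - 1 := by
  classical
  have hp1 : 1 < p := (Fact.out : p.Prime).one_lt
  ext m
  rw [map_sub, coeff_AHL, PowerSeries.coeff_one]
  rcases Nat.eq_zero_or_pos m with rfl | hm
  · rw [coeff_X_pow_mul_zero _ (by omega), if_pos ⟨0, by simp⟩, if_pos rfl]
    ring
  · rw [if_neg (show ¬ m = 0 by omega), sub_zero]
    by_cases hlt : m < p - 1
    · have hne : ¬ ∃ k : ℕ, m + 1 = p ^ k := by
        rintro ⟨k, hk⟩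
        rcases Nat.eq_zero_or_pos k with rfl | hk1
        · simp at hk; omega
        · have : p ≤ p ^ k := Nat.le_self_pow (by omega) p
          omega
      rw [coeff_X_pow_mul_zero _ hlt, if_neg hne]
    · push_neg at hlt
      obtain ⟨d, hdp⟩ : ∃ d, m + 1 = d + p := ⟨m + 1 - p, by omega⟩
      have hm' : m = d + (p - 1) := by omega
      have hd1 : d + (p - 1) + 1 = d + p := by omega
      rw [hm', coeff_X_pow_mul, coeff_AHPhi, hd1]
      by_cases hdvd : p ∣ d
      · obtain ⟨e, rfl⟩ := hdvd
        rw [if_pos ⟨e, rfl⟩, Nat.mul_div_cancel_left _ (by omega), coeff_AHL]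
        have hiff : (∃ k : ℕ, e + 1 = p ^ k) ↔ (∃ k : ℕ, p * e + p = p ^ k) := by
          constructor
          · rintro ⟨k, hk⟩
            refine ⟨k + 1, ?_⟩
            have h6 : p * e + p = p * (e + 1) := by ring
            rw [h6, hk, pow_succ]
            ring
          · rintro ⟨j, hj⟩
            have hpj : p ∣ p ^ j := by
              rw [← hj]
              exact Nat.dvd_add ⟨e, rfl⟩ (dvd_refl p)
            have hj1 : 1 ≤ j := by
              rcases Nat.eq_zero_or_pos j with rfl | h
              · simp at hpj; omega
              · exact h
            refine ⟨j - 1, ?_⟩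
            have h7 : p ^ j = p * p ^ (j - 1) := by
              conv_lhs => rw [show j = (j-1)+1 by omega, pow_succ]
              ring
            have h8 : p * (e + 1) = p * e + p := by ring
            have h2 : p * (e + 1) = p * p ^ (j - 1) := by omega
            exact Nat.eq_of_mul_eq_mul_left (by omega) h2
        exact if_congr hiff rfl rfl
      · have hne : ¬ ∃ k : ℕ, d + p = p ^ k := by
          rintro ⟨j, hj⟩
          have hj1 : 1 ≤ j := by
            rcases Nat.eq_zero_or_pos j with rfl | h
            · simp at hj; omega
            · exact h
          have hpj : p ∣ d + p := by
            rw [hj]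
            exact dvd_pow_self p (by omega)
          exact hdvd ((Nat.dvd_add_right (dvd_refl p)).mp (by rwa [Nat.add_comm] at hpj))
        rw [if_neg hdvd, if_neg hne]

lemma ODE_unique (M G H : PowerSeries ℚ_[p])
    (h0 : constantCoeff G = constantCoeff H)
    (hG : d⁄dX ℚ_[p] G = G * M) (hH : d⁄dX ℚ_[p] H = H * M) : G = H := by
  ext n
  induction n using Nat.strong_induction_on with
  | _ n ih =>
    match n with
    | 0 => simpa [coeff_zero_eq_constantCoeff] using h0
    | n + 1 =>
      have e1 := congrArg (coeff n) hG
      have e2 := congrArg (coeff n) hH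
      rw [coeff_derivative] at e1 e2
      have heq : coeff n (G * M) = coeff n (H * M) := by
        rw [coeff_mul, coeff_mul]
        refine Finset.sum_congr rfl fun x hx => ?_
        have hx1 : x.1 ≤ n := by
          have := Finset.HasAntidiagonal.mem_antidiagonal.mp hx
          omega
        rw [ih x.1 (by omega)]
      exact mul_right_cancel₀ (Nat.cast_add_one_ne_zero n) (e1.trans (heq.trans e2.symm))


lemma ofDigits_eq_zero (l : List ℕ) (h : ∀ x ∈ l, x = 0) : Nat.ofDigits p l = 0 := by
  induction l with
  | nil => simp [Nat.ofDigits]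
  | cons a t ih =>
    rw [Nat.ofDigits_cons, h a (by simp), ih (fun x hx => h x (by simp [hx]))]
    simp

lemma padicValNat_factorial_le' {j : ℕ} (hj : 1 ≤ j) :
    padicValNat p j.factorial ≤ j - 1 := by
  have hp1 : 1 < p := (Fact.out : p.Prime).one_lt
  have hs := sub_one_mul_padicValNat_factorial (p := p) j
  have hs1 : 1 ≤ (p.digits j).sum := by
    by_contra h
    push_neg at h
    have h0 : (p.digits j).sum = 0 := by omega
    have : ∀ x ∈ p.digits j, x = 0 := by
      intro x hx
      have := List.sum_eq_zero_iff.mp h0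
      exact this x hx
    have := ofDigits_eq_zero (p := p) _ this
    rw [Nat.ofDigits_digits] at this
    omega
  have hvle : padicValNat p j.factorial ≤ (p - 1) * padicValNat p j.factorial :=
    Nat.le_mul_of_pos_left _ (by omega)
  have hd := Nat.digit_sum_le p j
  omega

lemma norm_coeff_AHE_le {j : ℕ} (hj : 1 ≤ j) :
    ‖coeff j (AHE p)‖ ≤ (p : ℝ)⁻¹ := by
  have hp1 : 1 < p := (Fact.out : p.Prime).one_lt
  have hp0 : (0:ℝ) < p := by exact_mod_cast Nat.lt_of_lt_of_le Nat.zero_lt_one hp1.le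
  have hpinv0 : (0:ℝ) ≤ (p:ℝ)⁻¹ := by positivity
  have hpinv1 : (p:ℝ)⁻¹ ≤ 1 := by
    rw [inv_le_one_iff₀]
    right
    exact_mod_cast hp1.le
  set v := j.factorial.factorization p with hv
  have hveq : v = padicValNat p j.factorial := by
    rw [hv, Nat.factorization_def _ (Fact.out : p.Prime)]
  have hvj : v ≤ j - 1 := by rw [hveq]; exact padicValNat_factorial_le' hj
  -- factor j! = p^v * c
  have hfac : j.factorial = p ^ v * (j.factorial / p ^ v) :=
    (Nat.ordProj_mul_ordCompl_eq_self j.factorial p).symm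
  have hc : ¬ p ∣ (j.factorial / p ^ v) :=
    Nat.not_dvd_ordCompl (Fact.out : p.Prime) j.factorial_ne_zero
  have hcnorm : ‖((j.factorial / p ^ v : ℕ) : ℚ_[p])‖ = 1 := by
    refine le_antisymm (by exact_mod_cast Padic.norm_int_le_one _) ?_
    by_contra h
    push_neg at h
    have := (Padic.norm_intCast_lt_one_iff (k := ((j.factorial / p ^ v : ℕ) : ℤ))).mp
      (by exact_mod_cast h)
    exact hc (by exact_mod_cast this)
  have hnormfac : ‖((j.factorial : ℕ) : ℚ_[p])‖ = ((p:ℝ)⁻¹) ^ v := by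
    conv_lhs => rw [hfac]
    push_cast
    rw [norm_mul, norm_pow, Padic.norm_p, hcnorm, mul_one]
  have hne : ((j.factorial : ℕ) : ℚ_[p]) ≠ 0 := by
    exact_mod_cast (Nat.cast_ne_zero (R := ℚ_[p])).mpr j.factorial_ne_zero
  simp only [AHE, coeff_mk]
  rw [norm_div, norm_pow, Padic.norm_p, hnormfac]
  rw [div_le_iff₀ (by positivity)]
  calc ((p:ℝ)⁻¹) ^ j = ((p:ℝ)⁻¹) ^ (j - v) * ((p:ℝ)⁻¹) ^ v := by
        rw [← pow_add]
        congr 1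
        omega
    _ ≤ (p:ℝ)⁻¹ * ((p:ℝ)⁻¹) ^ v := by
        have : ((p:ℝ)⁻¹) ^ (j - v) ≤ ((p:ℝ)⁻¹) ^ 1 :=
          pow_le_pow_of_le_one hpinv0 hpinv1 (by omega)
        rw [pow_one] at this
        exact mul_le_mul_of_nonneg_right this (by positivity)

lemma padic_norm_sum_le {ι : Type*} (s : Finset ι) (t : ι → ℚ_[p]) {C : ℝ} (hC : 0 ≤ C)
    (h : ∀ i ∈ s, ‖t i‖ ≤ C) : ‖∑ i ∈ s, t i‖ ≤ C := by
  induction s using Finset.cons_induction with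
  | empty => simpa using hC
  | cons a s ha ih =>
    rw [Finset.sum_cons]
    refine le_trans (Padic.nonarchimedean _ _) (max_le ?_ ?_)
    · exact h a (Finset.mem_cons_self a s)
    · exact ih fun i hi => h i (Finset.mem_cons_of_mem hi)

lemma frob_coeff_norm (Q : Polynomial ℤ_[p]) (m : ℕ) :
    ‖(Q ^ p - (Polynomial.expand ℤ_[p] p) Q).coeff m‖ ≤ (p:ℝ)⁻¹ := by
  have h2 : ∀ h : Polynomial (ZMod p), h.map (frobenius (ZMod p) p) = h := by
    intro h
    ext k
    rw [Polynomial.coeff_map, frobenius_def, ZMod.pow_card]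
  have h1 := Polynomial.map_frobenius_expand p (Q.map (PadicInt.toZMod))
  rw [h2] at h1
  have hmap : (Q ^ p - (Polynomial.expand ℤ_[p] p) Q).map PadicInt.toZMod = 0 := by
    rw [Polynomial.map_sub, Polynomial.map_pow, Polynomial.map_expand, h1, sub_self]
  have h3 : PadicInt.toZMod ((Q ^ p - (Polynomial.expand ℤ_[p] p) Q).coeff m) = 0 := by
    rw [← Polynomial.coeff_map, hmap, Polynomial.coeff_zero]
  have h4 : (Q ^ p - (Polynomial.expand ℤ_[p] p) Q).coeff m ∈
      IsLocalRing.maximalIdeal ℤ_[p] := by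
    rw [← PadicInt.ker_toZMod]
    exact h3
  rw [PadicInt.maximalIdeal_eq_span_p, Ideal.mem_span_singleton] at h4
  obtain ⟨y, hy⟩ := h4
  rw [hy, norm_mul, PadicInt.norm_p]
  calc (p:ℝ)⁻¹ * ‖y‖ ≤ (p:ℝ)⁻¹ * 1 := by
        exact mul_le_mul_of_nonneg_left (PadicInt.norm_le_one y) (by positivity)
    _ = (p:ℝ)⁻¹ := mul_one _


noncomputable def toZp (x : ℚ_[p]) : ℤ_[p] :=
  if h : ‖x‖ ≤ 1 then ⟨x, h⟩ else 0

lemma toZp_coe {x : ℚ_[p]} (h : ‖x‖ ≤ 1) : ((toZp x : ℤ_[p]) : ℚ_[p]) = x := by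
  simp [toZp, h]

lemma ringHom_toZp_coe {x : ℚ_[p]} (h : ‖x‖ ≤ 1) :
    PadicInt.Coe.ringHom (toZp x) = x := toZp_coe h

lemma AH_eq (F : PowerSeries ℚ_[p]) (h0 : constantCoeff F = 1)
    (hd : d⁄dX ℚ_[p] F = F * AHL p) :
    F ^ p = AHPhi p F * AHE p := by
  have hppos : 0 < p := (Fact.out : p.Prime).pos
  have hp0 : p - 1 + 1 = p := Nat.succ_pred_eq_of_pos hppos
  refine ODE_unique (C ((p : ℕ) : ℚ_[p]) * AHL p) _ _ ?_ ?_ ?_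
  · rw [map_pow, h0, one_pow, map_mul, constantCoeff_AHE, mul_one]
    rw [← coeff_zero_eq_constantCoeff_apply, coeff_AHPhi, if_pos (dvd_zero p), Nat.zero_div,
      coeff_zero_eq_constantCoeff_apply, h0]
  · have hl := Derivation.leibniz_pow (d⁄dX ℚ_[p]) F p
    rw [hd, nsmul_eq_mul, smul_eq_mul] at hl
    rw [hl]
    have hC : ((p : ℕ) : PowerSeries ℚ_[p]) = C ((p : ℕ) : ℚ_[p]) :=
      (map_natCast (C (R := ℚ_[p])) p).symm
    have hpow : F ^ p = F ^ (p - 1) * F := by rw [← pow_succ, hp0]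
    rw [hC, hpow]
    ring
  · have hΦd : d⁄dX ℚ_[p] (AHPhi p F)
        = C ((p : ℕ) : ℚ_[p]) * (AHPhi p F * (AHL p - 1)) := by
      rw [AHPhi_deriv, hd, AHPhi_mul, smul_eq_C_mul]
      congr 1
      calc (X : PowerSeries ℚ_[p]) ^ (p - 1) * (AHPhi p F * AHPhi p (AHL p))
          = AHPhi p F * ((X : PowerSeries ℚ_[p]) ^ (p - 1) * AHPhi p (AHL p)) := by ring
        _ = AHPhi p F * (AHL p - 1) := by rw [X_pow_mul_AHPhi_AHL]
    rw [Derivation.leibniz, AHE_deriv, hΦd, smul_eq_mul, smul_eq_mul, smul_eq_C_mul]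
    ring

theorem AH_norm (F : PowerSeries ℚ_[p]) (h0 : constantCoeff F = 1)
    (hd : d⁄dX ℚ_[p] F = F * AHL p) (n : ℕ) : ‖coeff n F‖ ≤ 1 := by
  have hp : p.Prime := Fact.out
  have hpR : (0:ℝ) < p := by exact_mod_cast hp.pos
  have hpinv : (0:ℝ) < (p:ℝ)⁻¹ := by positivity
  have hEq := AH_eq F h0 hd
  induction n using Nat.strong_induction_on with
  | _ n ih =>
    match n with
    | 0 =>
      rw [coeff_zero_eq_constantCoeff_apply, h0, norm_one]
    | n + 1 =>
      set N := n + 1 with hN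
      have hN1 : 1 ≤ N := by omega
      set Q : Polynomial ℤ_[p] := ∑ i ∈ Finset.range N,
        Polynomial.C (toZp (coeff i F)) * Polynomial.X ^ i with hQ
      have hQc : ∀ j, Q.coeff j = if j < N then toZp (coeff j F) else 0 := by
        intro j
        rw [hQ, Polynomial.finset_sum_coeff]
        simp only [Polynomial.coeff_C_mul, Polynomial.coeff_X_pow, mul_ite, mul_one, mul_zero,
          Finset.sum_ite_eq, Finset.mem_range]
      set P : Polynomial ℚ_[p] := Q.map PadicInt.Coe.ringHom with hP
      have hPc : ∀ j, P.coeff j = if j < N then coeff j F else 0 := by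
        intro j
        rw [hP, Polynomial.coeff_map, hQc]
        split_ifs with h1
        · exact ringHom_toZp_coe (ih j (by omega))
        · exact map_zero _
      have hcP0 : constantCoeff ((P : Polynomial ℚ_[p]) : PowerSeries ℚ_[p]) = 1 := by
        rw [← coeff_zero_eq_constantCoeff_apply, Polynomial.coeff_coe, hPc, if_pos (by omega),
          coeff_zero_eq_constantCoeff_apply, h0]
      -- I1
      have hlow : ∀ i < N, coeff i (F - (↑P : PowerSeries ℚ_[p])) = 0 := by
        intro i hi
        rw [map_sub, Polynomial.coeff_coe, hPc, if_pos hi, sub_self]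
      have htop : coeff N (F - (↑P : PowerSeries ℚ_[p])) = coeff N F := by
        rw [map_sub, Polynomial.coeff_coe, hPc, if_neg (lt_irrefl N), sub_zero]
      have hgeom : (∑ i ∈ Finset.range p, F ^ i * (↑P : PowerSeries ℚ_[p]) ^ (p - 1 - i))
          * (F - (↑P : PowerSeries ℚ_[p])) = F ^ p - (↑P : PowerSeries ℚ_[p]) ^ p :=
        geom_sum₂_mul F _ p
      have hS0 : constantCoeff
          (∑ i ∈ Finset.range p, F ^ i * (↑P : PowerSeries ℚ_[p]) ^ (p - 1 - i)) = (p : ℚ_[p]) := by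
        rw [map_sum]
        rw [Finset.sum_congr rfl (fun i _ => by
          rw [map_mul, map_pow, map_pow, h0, hcP0, one_pow, one_pow, mul_one])]
        rw [Finset.sum_const, Finset.card_range, nsmul_eq_mul, mul_one]
      have hmulcoeff : coeff N
          ((∑ i ∈ Finset.range p, F ^ i * (↑P : PowerSeries ℚ_[p]) ^ (p - 1 - i))
            * (F - (↑P : PowerSeries ℚ_[p]))) = (p : ℚ_[p]) * coeff N F := by
        rw [coeff_mul]
        rw [Finset.sum_eq_single_of_mem (0, N) (by simp) ?_]
        · rw [coeff_zero_eq_constantCoeff_apply, hS0, htop]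
        · rintro ⟨i, j⟩ hmem hne
          have hij := Finset.HasAntidiagonal.mem_antidiagonal.mp hmem
          simp only at hij
          have hjN : j < N := by
            by_cases hj : j = N
            · exfalso
              apply hne
              have : i = 0 := by omega
              rw [this, hj]
            · omega
          rw [hlow j hjN, mul_zero]
      have hI1 : (p : ℚ_[p]) * coeff N F
          = coeff N (F ^ p) - (P ^ p).coeff N := by
        have h7 : coeff N ((↑P : PowerSeries ℚ_[p]) ^ p) = (P ^ p).coeff N := by
          rw [← Polynomial.coe_pow, Polynomial.coeff_coe]
        have h8 := congrArg (coeff N) hgeom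
        rw [hmulcoeff, map_sub, h7] at h8
        exact h8
      -- I3
      have hE0 : coeff 0 (AHE p) = 1 := by simp [AHE]
      have hsplit : coeff N (AHPhi p F * AHE p)
          = (∑ i ∈ Finset.range N, coeff i (AHPhi p F) * coeff (N - i) (AHE p))
            + coeff N (AHPhi p F) := by
        rw [coeff_mul, Finset.Nat.sum_antidiagonal_eq_sum_range_succ_mk, Finset.sum_range_succ]
        simp only [Nat.sub_self, hE0, mul_one]
      have herr : ‖∑ i ∈ Finset.range N, coeff i (AHPhi p F) * coeff (N - i) (AHE p)‖
          ≤ (p:ℝ)⁻¹ := by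
        refine padic_norm_sum_le _ _ (le_of_lt hpinv) ?_
        intro i hi
        rw [Finset.mem_range] at hi
        rw [norm_mul]
        have h1 : ‖coeff i (AHPhi p F)‖ ≤ 1 := by
          rw [coeff_AHPhi]
          split_ifs with h
          · exact ih (i / p) (by
              have := Nat.div_le_self i p
              omega)
          · simp
        have h2 : ‖coeff (N - i) (AHE p)‖ ≤ (p:ℝ)⁻¹ := norm_coeff_AHE_le (by omega)
        calc ‖coeff i (AHPhi p F)‖ * ‖coeff (N - i) (AHE p)‖
            ≤ 1 * (p:ℝ)⁻¹ := mul_le_mul h1 h2 (norm_nonneg _) zero_le_one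
          _ = (p:ℝ)⁻¹ := one_mul _
      -- I4
      have hI4 : coeff N (AHPhi p F) = ((Polynomial.expand ℚ_[p] p) P).coeff N := by
        rw [coeff_AHPhi, Polynomial.coeff_expand hp.pos]
        split_ifs with h
        · rw [hPc, if_pos (Nat.div_lt_self (by omega) hp.one_lt)]
        · rfl
      -- I5
      have hI5 : ‖(P ^ p - (Polynomial.expand ℚ_[p] p) P).coeff N‖ ≤ (p:ℝ)⁻¹ := by
        have hPmap : P ^ p - (Polynomial.expand ℚ_[p] p) P
            = (Q ^ p - (Polynomial.expand ℤ_[p] p) Q).map PadicInt.Coe.ringHom := by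
          rw [Polynomial.map_sub, Polynomial.map_pow, Polynomial.map_expand, hP]
        rw [hPmap, Polynomial.coeff_map]
        have : (PadicInt.Coe.ringHom ((Q ^ p - (Polynomial.expand ℤ_[p] p) Q).coeff N))
            = (((Q ^ p - (Polynomial.expand ℤ_[p] p) Q).coeff N : ℤ_[p]) : ℚ_[p]) := rfl
        rw [this, PadicInt.padic_norm_e_of_padicInt]
        exact frob_coeff_norm Q N
      -- assemble
      have hkey : (p : ℚ_[p]) * coeff N F
          = (∑ i ∈ Finset.range N, coeff i (AHPhi p F) * coeff (N - i) (AHE p))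
            + ((Polynomial.expand ℚ_[p] p P).coeff N - (P ^ p).coeff N) := by
        rw [hI1, hEq, hsplit, ← hI4]
        ring
      have hnorm : ‖(p : ℚ_[p]) * coeff N F‖ ≤ (p:ℝ)⁻¹ := by
        rw [hkey]
        refine le_trans (Padic.nonarchimedean _ _) (max_le herr ?_)
        have h9 : (Polynomial.expand ℚ_[p] p P).coeff N - (P ^ p).coeff N
            = -((P ^ p - (Polynomial.expand ℚ_[p] p) P).coeff N) := by
          rw [Polynomial.coeff_sub]
          ring
        rw [h9, norm_neg]
        exact hI5
      have h10 : ‖(p : ℚ_[p]) * coeff N F‖ = (p:ℝ)⁻¹ * ‖coeff N F‖ := by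
        rw [norm_mul, Padic.norm_p]
      rw [h10] at hnorm
      have hnorm' : (p:ℝ)⁻¹ * ‖coeff N F‖ ≤ (p:ℝ)⁻¹ * 1 := by rwa [mul_one]
      exact (mul_le_mul_iff_right₀ hpinv).mp hnorm'

end AHaux

/-- The Artin–Hasse exponential `AH_p(t) = exp (∑_{k ≥ 0} t^{p^k} / p^k)` has coefficients
in `ℤ_(p)`.  Here the Artin–Hasse exponential is characterised as the unique power series
`f ∈ ℚ⟦t⟧` with `f(0) = 1` satisfying the differential equation `f' = f · L` where
`L = ∑_{k ≥ 0} t^{p^k - 1}` is the derivative of the exponent `∑ t^{p^k}/p^k`; having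
coefficients in `ℤ_(p)` means that no coefficient has denominator divisible by `p`. -/
theorem stmt_8 (p : ℕ) [Fact p.Prime] (f : PowerSeries ℚ)
    (h0 : PowerSeries.constantCoeff f = 1)
    (hODE : ∀ n : ℕ, ((n : ℚ) + 1) * PowerSeries.coeff (n + 1) f =
      PowerSeries.coeff n
        (f * PowerSeries.mk
          (Set.indicator {m : ℕ | ∃ k : ℕ, m + 1 = p ^ k} fun _ => (1 : ℚ)))) :
    ∀ n : ℕ, ¬ (p : ℕ) ∣ (PowerSeries.coeff n f).den := by
  classical
  have hp : p.Prime := Fact.out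
  set F : PowerSeries ℚ_[p] := PowerSeries.map (Rat.castHom ℚ_[p]) f with hF
  have hF0 : constantCoeff F = 1 := by
    rw [hF, ← coeff_zero_eq_constantCoeff_apply, PowerSeries.coeff_map,
      coeff_zero_eq_constantCoeff_apply, h0, map_one]
  have hmapL : PowerSeries.map (Rat.castHom ℚ_[p])
      (PowerSeries.mk (Set.indicator {m : ℕ | ∃ k : ℕ, m + 1 = p ^ k} fun _ => (1 : ℚ)))
      = AHL p := by
    ext m
    rw [PowerSeries.coeff_map, coeff_mk, coeff_AHL]
    rw [Set.indicator_apply]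
    simp only [Set.mem_setOf_eq]
    by_cases hm : ∃ k : ℕ, m + 1 = p ^ k
    · rw [if_pos hm, if_pos hm, map_one]
    · rw [if_neg hm, if_neg hm, map_zero]
  have hFd : d⁄dX ℚ_[p] F = F * AHL p := by
    have hFL : F * AHL p = PowerSeries.map (Rat.castHom ℚ_[p])
        (f * PowerSeries.mk (Set.indicator {m : ℕ | ∃ k : ℕ, m + 1 = p ^ k} fun _ => (1 : ℚ))) := by
      rw [_root_.map_mul, hmapL, hF]
    ext n
    rw [coeff_derivative, hFL, PowerSeries.coeff_map, PowerSeries.coeff_map, ← hODE n,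
      _root_.map_mul, map_add, map_one, map_natCast, mul_comm]
  intro n hdvd
  have hq : ‖((PowerSeries.coeff n f : ℚ) : ℚ_[p])‖ ≤ 1 := by
    have := AH_norm F hF0 hFd n
    rw [hF, PowerSeries.coeff_map] at this
    exact this
  set q : ℚ := PowerSeries.coeff n f with hqdef
  have hnum : ¬ (p : ℤ) ∣ q.num := by
    intro h
    have h1 : p ∣ q.num.natAbs := by
      have := Int.natAbs_dvd_natAbs.mpr h
      simpa using this
    have h2 : p ∣ Nat.gcd q.num.natAbs q.den := Nat.dvd_gcd h1 hdvd
    rw [q.reduced] at h2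
    exact Nat.Prime.one_lt hp |>.ne' (Nat.dvd_one.mp h2)
  have hnormnum : ‖((q.num : ℤ) : ℚ_[p])‖ = 1 := by
    refine le_antisymm (Padic.norm_int_le_one _) ?_
    by_contra h
    push_neg at h
    exact hnum (Padic.norm_intCast_lt_one_iff.mp h)
  have hnormden : ‖((q.den : ℕ) : ℚ_[p])‖ < 1 := by
    have := (Padic.norm_intCast_lt_one_iff (k := ((q.den : ℕ) : ℤ))).mpr
      (Int.natCast_dvd_natCast.mpr hdvd)
    exact_mod_cast this
  have hden0 : ((q.den : ℕ) : ℚ_[p]) ≠ 0 :=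
    Nat.cast_ne_zero.mpr q.den_nz
  have hdenpos : 0 < ‖((q.den : ℕ) : ℚ_[p])‖ := norm_pos_iff.mpr hden0
  have hcast : ((q : ℚ) : ℚ_[p]) = ((q.num : ℤ) : ℚ_[p]) / ((q.den : ℕ) : ℚ_[p]) := by
    rw [Rat.cast_def]
  rw [hcast, norm_div, hnormnum] at hq
  have h3 : (1:ℝ) * ‖((q.den : ℕ) : ℚ_[p])‖ < 1 := by
    rw [one_mul]
    exact hnormden
  have h4 : (1:ℝ) < 1 / ‖((q.den : ℕ) : ℚ_[p])‖ := by
    rw [lt_div_iff₀ hdenpos]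
    exact h3
  linarith
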